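/- arXiv:2502.07115 — 6 statements merged into one kernel-verified Lean document; each statement's English description precedes it below -/
import Mathlib

section
/- Every deterministic online scheduling algorithm for the LLM inference scheduling problem has competitive ratio at least c·√n for some universal constant c > 0 and infinitely many n. Concretely: for every M ≥ 1 and every deterministic algorithm A, there is an instance with n = M/2 + 1 requests on which the total latency of A is at least (M/4)·(√M/2), while the hindsight-optimal total latency is at most 3.5·M; hence TEL(A)/OPT ≥ √M/28. -/
/-- Memory used at time `t` by a request with prompt size `s`, output length `o`,
started (non-preemptively) at time `p`: it occupies `s + (t - p)` units of memory
at every time `t ∈ (p, p + o]`, and nothing otherwise. -/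
def memUse (s o p t : ℕ) : ℕ := if p < t ∧ t ≤ p + o then s + (t - p) else 0

/-- A schedule `p` (start times) is feasible for an instance with arrival times `a`,
prompt sizes `s`, output lengths `o` on a single worker with memory limit `M`:
no request starts before its arrival, and at every time the total memory of
active requests is at most `M`. -/
def Feasible (M : ℕ) {n : ℕ} (a s o p : Fin n → ℕ) : Prop :=
  (∀ i, a i ≤ p i) ∧ ∀ t : ℕ, ∑ i, memUse (s i) (o i) (p i) t ≤ M

/-- Total end-to-end latency of a schedule: each request started at `p i` finishes
at `p i + o i`, so its latency is `p i + o i - a i`. -/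
def TEL {n : ℕ} (a o p : Fin n → ℕ) : ℕ := ∑ i, (p i + o i - a i)

/-- The adversarial instance, parametrized so that all quantities are integral:
`M = 4m²` (so `√M/2 = m` and `M/2 = 2m²`). Request `0` is the "long" request
(arrival `0`, output length `M - 1`); the `M/2 = 2m²` "short" requests (output
length `1`) arrive at `r = b + M - √M/2 = b + 4m² - m`, where `b` is the time
the algorithm starts the long request. All prompt sizes are `1`. -/
def instArrival (m b : ℕ) : Fin (2 * m ^ 2 + 1) → ℕ :=
  fun i => if i.val = 0 then 0 else b + 4 * m ^ 2 - m

def instSize (m b : ℕ) : Fin (2 * m ^ 2 + 1) → ℕ := fun _ => 1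

def instOut (m b : ℕ) : Fin (2 * m ^ 2 + 1) → ℕ :=
  fun i => if i.val = 0 then 4 * m ^ 2 - 1 else 1

lemma memUse_le (s o p t : ℕ) : memUse s o p t ≤ s + o := by
  unfold memUse; split <;> omega

lemma memUse_short (p t : ℕ) : memUse 1 1 p t = if t = p + 1 then 2 else 0 := by
  unfold memUse; split_ifs <;> omega

/-- Every deterministic online algorithm has competitive ratio at least `√M/28 = m/14`
on the adversarial instance (with `n = M/2 + 1` requests): whatever time `b` the
algorithm commits to starting the long request, any feasible schedule starting the
long request at `b` has total latency at least `(M/4)·(√M/2) = m³`, while some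
feasible schedule (hindsight optimum) has total latency at most `3.5·M = 14m²`;
hence `TEL(A)/OPT ≥ m/14 = √M/28`. -/
theorem stmt5 (m b : ℕ) (hm : 1 ≤ m) :
    (∀ p : Fin (2 * m ^ 2 + 1) → ℕ,
      Feasible (4 * m ^ 2) (instArrival m b) (instSize m b) (instOut m b) p →
      p ⟨0, Nat.succ_pos _⟩ = b →
      m ^ 2 * m ≤ TEL (instArrival m b) (instOut m b) p) ∧
    (∃ q : Fin (2 * m ^ 2 + 1) → ℕ,
      Feasible (4 * m ^ 2) (instArrival m b) (instSize m b) (instOut m b) q ∧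
      TEL (instArrival m b) (instOut m b) q ≤ 7 * (4 * m ^ 2) / 2) ∧
    (∀ p : Fin (2 * m ^ 2 + 1) → ℕ,
      Feasible (4 * m ^ 2) (instArrival m b) (instSize m b) (instOut m b) p →
      p ⟨0, Nat.succ_pos _⟩ = b →
      ∃ q : Fin (2 * m ^ 2 + 1) → ℕ,
        Feasible (4 * m ^ 2) (instArrival m b) (instSize m b) (instOut m b) q ∧
        m * TEL (instArrival m b) (instOut m b) q ≤
          14 * TEL (instArrival m b) (instOut m b) p) := by
  have hmm : m ≤ m ^ 2 := by nlinarith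
  set r : ℕ := b + 4 * m ^ 2 - m with hr
  -- Part 1
  have part1 : ∀ p : Fin (2 * m ^ 2 + 1) → ℕ,
      Feasible (4 * m ^ 2) (instArrival m b) (instSize m b) (instOut m b) p →
      p ⟨0, Nat.succ_pos _⟩ = b →
      m ^ 2 * m ≤ TEL (instArrival m b) (instOut m b) p := by
    intro p hp hp0
    have hp0' : p 0 = b := hp0
    set T : Finset (Fin (2 * m ^ 2)) :=
      Finset.univ.filter (fun i => p i.succ + 1 ≤ b + 4 * m ^ 2 - 1) with hT
    set Tc : Finset (Fin (2 * m ^ 2)) :=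
      Finset.univ.filter (fun i => ¬ (p i.succ + 1 ≤ b + 4 * m ^ 2 - 1)) with hTc
    -- fiber bound
    have hfiber : ∀ t ∈ Finset.Ioc r (b + 4 * m ^ 2 - 1),
        (T.filter (fun i => p i.succ + 1 = t)).card ≤ m := by
      intro t ht
      simp only [Finset.mem_Ioc] at ht
      have hfeas := hp.2 t
      rw [Fin.sum_univ_succ] at hfeas
      simp only [instArrival, instSize, instOut, Fin.val_zero, Fin.val_succ,
        Nat.succ_ne_zero, if_true, if_pos rfl, Nat.add_eq_zero, and_false,
        if_false, ite_false, reduceIte] at hfeas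
      have hlong : memUse 1 (4 * m ^ 2 - 1) (p 0) t = 1 + (t - b) := by
        rw [hp0']
        unfold memUse
        rw [if_pos]
        omega
      have hshort : 2 * (T.filter (fun i => p i.succ + 1 = t)).card
          ≤ ∑ i : Fin (2 * m ^ 2), memUse 1 1 (p i.succ) t := by
        calc 2 * (T.filter (fun i => p i.succ + 1 = t)).card
            = ∑ i ∈ T.filter (fun i => p i.succ + 1 = t), 2 := by
              rw [Finset.sum_const, smul_eq_mul, mul_comm]
          _ = ∑ i ∈ T.filter (fun i => p i.succ + 1 = t), memUse 1 1 (p i.succ) t := by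
              apply Finset.sum_congr rfl
              intro i hi
              simp only [Finset.mem_filter] at hi
              rw [memUse_short, if_pos (by omega)]
          _ ≤ ∑ i : Fin (2 * m ^ 2), memUse 1 1 (p i.succ) t :=
              Finset.sum_le_sum_of_subset (Finset.subset_univ _)
      omega
    have hmaps : ∀ i ∈ T, p i.succ + 1 ∈ Finset.Ioc r (b + 4 * m ^ 2 - 1) := by
      intro i hi
      simp only [hT, Finset.mem_filter] at hi
      have harr := hp.1 i.succ
      simp only [instArrival, Fin.val_succ, Nat.succ_ne_zero, if_false, reduceIte] at harr
      simp only [Finset.mem_Ioc]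
      omega
    have hcardT : T.card ≤ m * (m - 1) := by
      have := Finset.card_le_mul_card_image_of_maps_to hmaps m hfiber
      rwa [Nat.card_Ioc, show b + 4 * m ^ 2 - 1 - r = m - 1 by omega] at this
    have hcard : T.card + Tc.card = 2 * m ^ 2 :=
      (Finset.card_filter_add_card_filter_not _).trans (by simp)
    have hcardTc : m ^ 2 ≤ Tc.card := by
      have h1 : m * (m - 1) ≤ m * m := Nat.mul_le_mul_left _ (Nat.sub_le _ _)
      have h2 : m * m = m ^ 2 := (sq m).symm
      omega
    -- sum lower bound
    have hTEL : Tc.card * m ≤ TEL (instArrival m b) (instOut m b) p := by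
      unfold TEL
      rw [Fin.sum_univ_succ]
      have hsum : Tc.card * m ≤ ∑ i : Fin (2 * m ^ 2),
          (p i.succ + instOut m b i.succ - instArrival m b i.succ) := by
        calc Tc.card * m = ∑ _i ∈ Tc, m := by rw [Finset.sum_const, smul_eq_mul]
          _ ≤ ∑ i ∈ Tc, (p i.succ + instOut m b i.succ - instArrival m b i.succ) := by
              apply Finset.sum_le_sum
              intro i hi
              simp only [hTc, Finset.mem_filter] at hi
              simp only [instArrival, instOut, Fin.val_succ, Nat.succ_ne_zero, reduceIte]
              omega
          _ ≤ _ := Finset.sum_le_sum_of_subset (Finset.subset_univ _)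
      omega
    calc m ^ 2 * m ≤ Tc.card * m := Nat.mul_le_mul_right _ hcardTc
      _ ≤ _ := hTEL
  -- Part 2
  have part2 : ∃ q : Fin (2 * m ^ 2 + 1) → ℕ,
      Feasible (4 * m ^ 2) (instArrival m b) (instSize m b) (instOut m b) q ∧
      TEL (instArrival m b) (instOut m b) q ≤ 7 * (4 * m ^ 2) / 2 := by
    have hdiv : 7 * (4 * m ^ 2) / 2 = 14 * m ^ 2 := by omega
    rw [hdiv]
    by_cases hb : b + 1 < m
    · -- shorts at r, long at r + 1
      refine ⟨fun i => if i.val = 0 then r + 1 else r, ⟨?_, ?_⟩, ?_⟩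
      · intro i
        simp only [instArrival]
        split <;> omega
      · intro t
        rw [Fin.sum_univ_succ]
        simp only [instArrival, instSize, instOut, Fin.val_zero, Fin.val_succ,
          Nat.succ_ne_zero, reduceIte]
        have hshorts : ∑ _i : Fin (2 * m ^ 2), memUse 1 1 r t
            = 2 * m ^ 2 * (if t = r + 1 then 2 else 0) := by
          rw [Finset.sum_const, Finset.card_univ, Fintype.card_fin, smul_eq_mul,
            memUse_short]
        rw [hshorts]
        by_cases ht : t = r + 1
        · have hl : memUse 1 (4 * m ^ 2 - 1) (r + 1) t = 0 := by
            unfold memUse; rw [if_neg (by omega)]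
          rw [hl, if_pos ht]
          omega
        · have := memUse_le 1 (4 * m ^ 2 - 1) (r + 1) t
          rw [if_neg ht]
          omega
      · unfold TEL
        rw [Fin.sum_univ_succ]
        simp only [instArrival, instOut, Fin.val_zero, Fin.val_succ,
          Nat.succ_ne_zero, reduceIte]
        rw [Finset.sum_const, Finset.card_univ, Fintype.card_fin, smul_eq_mul,
          show r + 1 - (b + 4 * m ^ 2 - m) = 1 by omega, mul_one]
        omega
    · -- long at 0, shorts at r
      refine ⟨fun i => if i.val = 0 then 0 else r, ⟨?_, ?_⟩, ?_⟩
      · intro i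
        simp only [instArrival]
        split <;> omega
      · intro t
        rw [Fin.sum_univ_succ]
        simp only [instArrival, instSize, instOut, Fin.val_zero, Fin.val_succ,
          Nat.succ_ne_zero, reduceIte]
        have hshorts : ∑ _i : Fin (2 * m ^ 2), memUse 1 1 r t
            = 2 * m ^ 2 * (if t = r + 1 then 2 else 0) := by
          rw [Finset.sum_const, Finset.card_univ, Fintype.card_fin, smul_eq_mul,
            memUse_short]
        rw [hshorts]
        by_cases ht : t = r + 1
        · have hl : memUse 1 (4 * m ^ 2 - 1) 0 t = 0 := by
            unfold memUse; rw [if_neg (by omega)]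
          rw [hl, if_pos ht]
          omega
        · have := memUse_le 1 (4 * m ^ 2 - 1) 0 t
          rw [if_neg ht]
          omega
      · unfold TEL
        rw [Fin.sum_univ_succ]
        simp only [instArrival, instOut, Fin.val_zero, Fin.val_succ,
          Nat.succ_ne_zero, reduceIte]
        rw [Finset.sum_const, Finset.card_univ, Fintype.card_fin, smul_eq_mul,
          show r + 1 - (b + 4 * m ^ 2 - m) = 1 by omega, mul_one]
        omega
  refine ⟨part1, part2, ?_⟩
  intro p hp hp0
  obtain ⟨q, hq, hqTEL⟩ := part2
  refine ⟨q, hq, ?_⟩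
  have h1 := part1 p hp hp0
  have hdiv : 7 * (4 * m ^ 2) / 2 = 14 * m ^ 2 := by omega
  calc m * TEL (instArrival m b) (instOut m b) q ≤ m * (14 * m ^ 2) := by
        apply Nat.mul_le_mul_left; omega
    _ = 14 * (m ^ 2 * m) := by ring
    _ ≤ 14 * TEL (instArrival m b) (instOut m b) p := Nat.mul_le_mul_left _ h1
end

section
/- In the adversarial lower-bound instance (one long request with o₁ = M−1 released at time 0 and started by the algorithm at time b, and M/2 short requests with o=1, s=1 released at time r = b + M − √M/2), the hindsight-optimal total latency is at most 3.5·M. -/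
lemma sum_ite_fin (n c0 c : ℕ) :
    (∑ i : Fin (n + 1), if (i : ℕ) = 0 then c0 else c) = c0 + n * c := by
  rw [Fin.sum_univ_succ]
  simp [Fin.val_succ, mul_comm]

lemma main_aux (m b q0 : ℕ) (hm : 1 ≤ m)
    (hno : ¬(q0 < b + 4 * m ^ 2 - m + 1 ∧ b + 4 * m ^ 2 - m + 1 ≤ q0 + (4 * m ^ 2 - 1)))
    (hbound : q0 + (4 * m ^ 2 - 1) + 2 * m ^ 2 ≤ 14 * m ^ 2) :
    ∃ q : Fin (2 * m ^ 2 + 1) → ℕ,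
      Feasible (4 * m ^ 2) (instArrival m b) (instSize m b) (instOut m b) q ∧
      TEL (instArrival m b) (instOut m b) q ≤ 7 * (4 * m ^ 2) / 2 := by
  have hmk : m ≤ m ^ 2 := Nat.le_self_pow two_ne_zero m
  set r := b + 4 * m ^ 2 - m with hr
  refine ⟨fun i => if (i : ℕ) = 0 then q0 else r, ⟨?_, ?_⟩, ?_⟩
  · intro i
    by_cases h : (i : ℕ) = 0 <;> simp [instArrival, h, hr]
  · intro t
    have heq : ∀ i : Fin (2 * m ^ 2 + 1),
        memUse (instSize m b i) (instOut m b i) (if (i : ℕ) = 0 then q0 else r) t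
          = if (i : ℕ) = 0 then memUse 1 (4 * m ^ 2 - 1) q0 t else memUse 1 1 r t := by
      intro i
      by_cases h : (i : ℕ) = 0 <;> simp [instSize, instOut, h]
    rw [Finset.sum_congr rfl (fun i _ => heq i), sum_ite_fin]
    have h2 : memUse 1 1 r t = if t = r + 1 then 2 else 0 := by
      unfold memUse; split_ifs <;> omega
    rw [h2]
    by_cases ht : t = r + 1
    · simp only [ht, if_pos rfl]
      unfold memUse
      split_ifs <;> omega
    · simp only [if_neg ht, mul_zero, add_zero]
      unfold memUse
      split_ifs <;> omega
  · unfold TEL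
    have heq : ∀ i : Fin (2 * m ^ 2 + 1),
        ((if (i : ℕ) = 0 then q0 else r) + instOut m b i - instArrival m b i)
          = if (i : ℕ) = 0 then q0 + (4 * m ^ 2 - 1) else 1 := by
      intro i
      by_cases h : (i : ℕ) = 0 <;> simp [instArrival, instOut, h, hr] <;> omega
    rw [Finset.sum_congr rfl (fun i _ => heq i), sum_ite_fin]
    omega

/-- In the adversarial lower-bound instance, the hindsight-optimal total latency is
at most `3.5·M = 14m²`: there is a feasible schedule with total latency `≤ 7M/2`. -/
theorem stmt6 (m b : ℕ) (hm : 1 ≤ m) :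
    ∃ q : Fin (2 * m ^ 2 + 1) → ℕ,
      Feasible (4 * m ^ 2) (instArrival m b) (instSize m b) (instOut m b) q ∧
      TEL (instArrival m b) (instOut m b) q ≤ 7 * (4 * m ^ 2) / 2 := by
  have hmk : m ≤ m ^ 2 := Nat.le_self_pow two_ne_zero m
  by_cases hb : m ≤ b + 1
  · exact main_aux m b 0 hm (by omega) (by omega)
  · exact main_aux m b (b + 4 * m ^ 2 - m + 1) hm (by omega) (by omega)
end

section
/- In the adversarial lower-bound instance, any deterministic algorithm incurs total latency at least (M/4)·(√M/2): during the √M/2 time steps in [b + M − √M/2, b + M − 1] the long request occupies at least M − √M/2 memory, so the total memory available for short requests in that window is at most M/4; hence at least M/4 of the M/2 short requests (each needing memory ≥ 1 per step to be processed) can only start at or after time b + M, and each such request incurs latency at least √M/2. -/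
/-!
While the long request (started at `b`) is running during the last `m = √M/2` steps before it
finishes, it occupies more than `M - m` memory, so at most `m` short requests can be processed in
each of these steps. Hence at most `m²` of the `2m²` short requests start before time
`b + M - 1`, and each of the remaining `m²` waits at least `m` steps after its arrival.
-/

open Finset

theorem memUse_of_mem {s o p t : ℕ} (h : p < t ∧ t ≤ p + o) : memUse s o p t = s + (t - p) :=
  if_pos h

theorem one_le_memUse_succ {s o v : ℕ} (ho : 1 ≤ o) : 1 ≤ memUse s o v (v + 1) := by
  rw [memUse_of_mem ⟨v.lt_succ_self, by omega⟩]
  omega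

theorem Feasible.card_add_memUse_le {M n : ℕ} {a s o p : Fin n → ℕ} (h : Feasible M a s o p)
    {S : Finset (Fin n)} {j : Fin n} {v : ℕ} (hj : j ∉ S)
    (hS : ∀ i ∈ S, p i = v ∧ 1 ≤ o i) :
    #S + memUse (s j) (o j) (p j) (v + 1) ≤ M := by
  have hcard : #S ≤ ∑ i ∈ S, memUse (s i) (o i) (p i) (v + 1) := by
    simpa using card_nsmul_le_sum S (fun i => memUse (s i) (o i) (p i) (v + 1)) 1 fun i hi => by
      obtain ⟨rfl, ho⟩ := hS i hi
      exact one_le_memUse_succ ho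
  calc #S + memUse (s j) (o j) (p j) (v + 1)
      ≤ ∑ i ∈ insert j S, memUse (s i) (o i) (p i) (v + 1) := by
        rw [sum_insert hj]
        omega
    _ ≤ ∑ i, memUse (s i) (o i) (p i) (v + 1) := sum_le_sum_of_subset (subset_univ _)
    _ ≤ M := h.2 (v + 1)

theorem card_mul_le_TEL {n d : ℕ} {a o p : Fin n → ℕ} {S : Finset (Fin n)}
    (hS : ∀ i ∈ S, d ≤ p i + o i - a i) : #S * d ≤ TEL a o p :=
  calc #S * d = #S • d := (smul_eq_mul _ _).symm
    _ ≤ ∑ i ∈ S, (p i + o i - a i) := card_nsmul_le_sum S _ d hS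
    _ ≤ TEL a o p := sum_le_sum_of_subset (subset_univ S)

section Instance

variable {m b : ℕ} {i : Fin (2 * m ^ 2 + 1)}

theorem instArrival_of_ne_zero (hi : i ≠ 0) : instArrival m b i = b + 4 * m ^ 2 - m := by
  simp [instArrival, Fin.val_eq_zero_iff, hi]

theorem instOut_of_ne_zero (hi : i ≠ 0) : instOut m b i = 1 := by
  simp [instOut, Fin.val_eq_zero_iff, hi]

variable {p : Fin (2 * m ^ 2 + 1) → ℕ}

theorem le_latency_of_ne_zero (hi : i ≠ 0) (hstart : b + 4 * m ^ 2 - 1 ≤ p i) :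
    m ≤ p i + instOut m b i - instArrival m b i := by
  rw [instOut_of_ne_zero hi, instArrival_of_ne_zero hi]
  have hm : m ≤ m ^ 2 := Nat.le_self_pow two_ne_zero m
  omega

variable (hfeas : Feasible (4 * m ^ 2) (instArrival m b) (instSize m b) (instOut m b) p)
  (hp0 : p 0 = b)
include hfeas hp0

theorem card_short_start_lt_le : #{i ∈ univ.erase 0 | p i < b + 4 * m ^ 2 - 1} ≤ m ^ 2 := by
  set E : Finset (Fin (2 * m ^ 2 + 1)) := {i ∈ univ.erase 0 | p i < b + 4 * m ^ 2 - 1}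
  have hm : m ≤ m ^ 2 := Nat.le_self_pow two_ne_zero m
  have hstart : ∀ i ∈ E, p i ∈ Ico (b + 4 * m ^ 2 - m) (b + 4 * m ^ 2 - 1) := by
    intro i hi
    obtain ⟨hi0, hlt⟩ := mem_filter.1 hi
    have harr := hfeas.1 i
    rw [instArrival_of_ne_zero (ne_of_mem_erase hi0)] at harr
    exact mem_Ico.2 ⟨harr, hlt⟩
  have hfiber :
      ∀ v ∈ Ico (b + 4 * m ^ 2 - m) (b + 4 * m ^ 2 - 1), #{i ∈ E | p i = v} ≤ m := by
    intro v hv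
    rw [mem_Ico] at hv
    have hshort : ∀ i ∈ {i ∈ E | p i = v}, p i = v ∧ 1 ≤ instOut m b i := by
      intro i hi
      simp only [E, mem_filter, mem_erase] at hi
      exact ⟨hi.2, (instOut_of_ne_zero hi.1.1.1).ge⟩
    have hzero : (0 : Fin (2 * m ^ 2 + 1)) ∉ {i ∈ E | p i = v} := by simp [E]
    have hcap := hfeas.card_add_memUse_le hzero hshort
    rw [hp0, memUse_of_mem (by simp [instOut]; omega)] at hcap
    simp only [instSize] at hcap
    omega
  calc #E ≤ m * #(Ico (b + 4 * m ^ 2 - m) (b + 4 * m ^ 2 - 1)) :=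
        card_le_mul_card_image_of_maps_to hstart m hfiber
    _ ≤ m * m := by
        gcongr
        rw [Nat.card_Ico]
        omega
    _ = m ^ 2 := (sq m).symm

theorem le_card_short_start_ge : m ^ 2 ≤ #{i ∈ univ.erase 0 | b + 4 * m ^ 2 - 1 ≤ p i} := by
  have hsplit := card_filter_add_card_filter_not (s := univ.erase 0)
    fun i : Fin (2 * m ^ 2 + 1) => p i < b + 4 * m ^ 2 - 1
  simp only [not_lt, card_erase_of_mem (mem_univ _), card_univ, Fintype.card_fin] at hsplit
  have := card_short_start_lt_le hfeas hp0
  omega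

end Instance

theorem stmt7_general (m b : ℕ) :
    ∀ p : Fin (2 * m ^ 2 + 1) → ℕ,
      Feasible (4 * m ^ 2) (instArrival m b) (instSize m b) (instOut m b) p →
      p ⟨0, Nat.succ_pos _⟩ = b →
      m ^ 2 * m ≤ TEL (instArrival m b) (instOut m b) p := by
  intro p hfeas hp0
  rw [Fin.mk_zero] at hp0
  refine le_trans (Nat.mul_le_mul_right m (le_card_short_start_ge hfeas hp0)) ?_
  exact card_mul_le_TEL fun i hi =>
    le_latency_of_ne_zero (ne_of_mem_erase (mem_filter.1 hi).1) (mem_filter.1 hi).2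

/-- In the adversarial lower-bound instance, any deterministic algorithm (i.e. any
feasible schedule that starts the long request at time `b`) incurs total latency
at least `(M/4)·(√M/2) = m²·m`. -/
theorem stmt7 (m b : ℕ) (hm : 1 ≤ m) :
    ∀ p : Fin (2 * m ^ 2 + 1) → ℕ,
      Feasible (4 * m ^ 2) (instArrival m b) (instSize m b) (instOut m b) p →
      p ⟨0, Nat.succ_pos _⟩ = b →
      m ^ 2 * m ≤ TEL (instArrival m b) (instOut m b) p :=
  stmt7_general m b
end

section
/- (Peak-to-volume claim) Suppose during three consecutive time intervals I_j, I_{j+1}, I_{j+2}, each of length ō, an algorithm processes only requests with prompt size s and output lengths in [o̲, ō] where ō ≤ 2·o̲, and every request processed during I_{j+1} is fully contained in I_j ∪ I_{j+1} ∪ I_{j+2}. If at some time in I_{j+1} the total memory occupied is P and each active request contributes at most s + ō to P (so at least P/(s+ō) requests are active), and each such request contributes at least vol(o̲) ≥ (1/4)·vol(ō) to the total volume, then the total memory volume consumed by these requests over I_j ∪ I_{j+1} ∪ I_{j+2} is at least (1/4)·P·vol(ō)/(s + ō). -/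
/-- (Peak-to-volume claim.) With `vol(x) = s·x + x·(x+1)/2`, if at the peak time
the total occupied memory is `P`, `k` active requests each contribute at most
`s + ō` to `P` (so `k ≥ P/(s+ō)`), each fully processed request contributes at
least `vol(o̲) ≥ (1/4)·vol(ō)` to the total volume `V` consumed over the three
consecutive intervals, then `V ≥ (1/4)·P·vol(ō)/(s+ō)`. -/
theorem stmt8 (s olow obar P V : ℝ) (k : ℕ) (hs : 0 ≤ s) (holow : 1 ≤ olow)
    (h1 : olow ≤ obar) (h2 : obar ≤ 2 * olow) (hP : 0 ≤ P)
    (hvol : (s * obar + obar * (obar + 1) / 2) / 4 ≤ s * olow + olow * (olow + 1) / 2)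
    (hk : P / (s + obar) ≤ (k : ℝ))
    (hV : (k : ℝ) * (s * olow + olow * (olow + 1) / 2) ≤ V) :
    1 / 4 * P * (s * obar + obar * (obar + 1) / 2) / (s + obar) ≤ V := by
  have hobar : (1:ℝ) ≤ obar := holow.trans h1
  have hso : (0:ℝ) < s + obar := by linarith
  have hvb : (0:ℝ) ≤ s * obar + obar * (obar + 1) / 2 := by nlinarith
  have h3 : P / (s + obar) * ((s * obar + obar * (obar + 1) / 2) / 4) ≤
      (k : ℝ) * (s * olow + olow * (olow + 1) / 2) := by
    apply mul_le_mul hk hvol (by positivity) (le_trans (by positivity) hk)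
  have := h3.trans hV
  calc 1 / 4 * P * (s * obar + obar * (obar + 1) / 2) / (s + obar)
      = P / (s + obar) * ((s * obar + obar * (obar + 1) / 2) / 4) := by
        rw [div_mul_div_comm, mul_comm (s + obar) 4, ← div_div]
        ring
    _ ≤ V := this
end

section
/- (Per-length lower bound on OPT) In any feasible schedule with memory capacity M, for each output length o, at most n_o/2 of the n_o requests of that length can complete by time (n_o/2)·vol(o)/M; hence the total latency of requests of length o is at least (n_o/2)·(n_o/2)·vol(o)/M, and summing over o gives OPT ≥ (1/(4M))·∑_o n_o²·vol(o). -/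
/-!
Fix a length `o` with `n` requests and put `x = n·vol(o)/(2M)`. Every request of length `o`
completed by time `⌊x⌋` contributes `vol(o)` to a total volume of at most
`⌊x⌋·M ≤ n·vol(o)/2`, so at most `n/2` of them complete by then, and the other `n/2` each
have latency at least `x`. Hence the latencies of length `o` sum to at least
`(n/2)·x = n²·vol(o)/(4M)`; summing over `o` gives the bound.
-/

open Finset

section

variable {I : Type*}

theorem half_card_mul_le_sum_of_card_filter_le (S : Finset I) (c : I → ℕ) {x : ℝ}
    (hx : 0 ≤ x)
    (hfew : (#(S.filter (c · ≤ ⌊x⌋₊)) : ℝ) ≤ #S / 2) :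
    #S / 2 * x ≤ ∑ i ∈ S, (c i : ℝ) := by
  set late := S.filter (fun i => ¬ c i ≤ ⌊x⌋₊)
  have hcard : (#(S.filter (c · ≤ ⌊x⌋₊)) : ℝ) + #late = #S := by
    exact_mod_cast card_filter_add_card_filter_not _
  have hlate : ∀ i ∈ late, x ≤ c i := fun i hi =>
    ((Nat.floor_lt hx).mp (not_le.mp (mem_filter.mp hi).2)).le
  calc #S / 2 * x ≤ #late * x := by gcongr; linarith
    _ = ∑ _ ∈ late, x := by rw [sum_const, nsmul_eq_mul]
    _ ≤ ∑ i ∈ late, (c i : ℝ) := sum_le_sum hlate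
    _ ≤ ∑ i ∈ S, (c i : ℝ) :=
      sum_le_sum_of_subset_of_nonneg (filter_subset _ _) fun i _ _ => Nat.cast_nonneg _

variable [Fintype I] (len c : I → ℕ) (vol : ℕ → ℝ) (M : ℝ)

theorem card_completed_mul_vol_le (hvol : ∀ o, 0 ≤ vol o)
    (hfeas : ∀ T : ℕ, ∑ i ∈ univ.filter (fun i => c i ≤ T), vol (len i) ≤ (T : ℝ) * M)
    (o T : ℕ) :
    (#((univ.filter (fun i => len i = o)).filter (c · ≤ T)) : ℝ) * vol o ≤ T * M := by
  set done := (univ.filter (fun i => len i = o)).filter (c · ≤ T)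
  calc (#done : ℝ) * vol o = ∑ i ∈ done, vol (len i) := by
        rw [sum_congr rfl fun i hi => by rw [(mem_filter.mp (mem_filter.mp hi).1).2],
          sum_const, nsmul_eq_mul]
    _ ≤ ∑ i ∈ univ.filter (fun i => c i ≤ T), vol (len i) :=
        sum_le_sum_of_subset_of_nonneg (fun i hi => by simp_all [done])
          fun i _ _ => hvol _
    _ ≤ T * M := hfeas T

theorem sq_card_mul_vol_div_le_sum_latency (hM : 0 < M) (hvol : ∀ o, 0 < vol o)
    (hfeas : ∀ T : ℕ, ∑ i ∈ univ.filter (fun i => c i ≤ T), vol (len i) ≤ (T : ℝ) * M)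
    (o : ℕ) :
    1 / (4 * M) * ((#(univ.filter (fun i => len i = o)) : ℝ) ^ 2 * vol o) ≤
      ∑ i ∈ univ.filter (fun i => len i = o), (c i : ℝ) := by
  set S := univ.filter (fun i => len i = o)
  set x : ℝ := #S * vol o / (2 * M)
  have hvo := hvol o
  have hx : 0 ≤ x := by positivity
  have hfew : (#(S.filter (c · ≤ ⌊x⌋₊)) : ℝ) ≤ #S / 2 := by
    have hdone := card_completed_mul_vol_le len c vol M (fun o => (hvol o).le) hfeas o ⌊x⌋₊
    have hxM : x * M = #S / 2 * vol o := by simp only [x]; field_simp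
    have hfloor := mul_le_mul_of_nonneg_right (Nat.floor_le hx) hM.le
    exact le_of_mul_le_mul_right (by linarith) hvo
  calc 1 / (4 * M) * ((#S : ℝ) ^ 2 * vol o) = #S / 2 * x := by simp only [x]; field_simp; ring
    _ ≤ ∑ i ∈ S, (c i : ℝ) := half_card_mul_le_sum_of_card_filter_le S c hx hfew

end

theorem stmt10_general {I : Type*} [Fintype I]
    (len c : I → ℕ) (vol : ℕ → ℝ) (M : ℝ)
    (hM : 0 < M) (hvol : ∀ o, 0 < vol o)
    (hfeas : ∀ T : ℕ,
      ∑ i ∈ Finset.univ.filter (fun i => c i ≤ T), vol (len i) ≤ (T : ℝ) * M) :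
    1 / (4 * M) * ∑ o ∈ Finset.image len Finset.univ,
        ((Finset.univ.filter (fun i => len i = o)).card : ℝ) ^ 2 * vol o ≤
      ∑ i, (c i : ℝ) := by
  rw [mul_sum]
  calc _ ≤ ∑ o ∈ image len univ, ∑ i ∈ univ.filter (fun i => len i = o), (c i : ℝ) :=
        sum_le_sum fun o _ => sq_card_mul_vol_div_le_sum_latency len c vol M hM hvol hfeas o
    _ = ∑ i, (c i : ℝ) :=
        sum_fiberwise_of_maps_to (fun i _ => mem_image_of_mem len (mem_univ i)) _

/-- (Per-length lower bound on OPT.) All requests arrive at time 0; `c i` is the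
completion time (= latency) of request `i` and `len i` its output length. In any
schedule feasible for memory capacity `M` — meaning the total volume of requests
completed by any time `T` is at most `T·M` — the total latency is at least
`(1/(4M))·∑_o n_o²·vol(o)`, where `n_o` is the number of requests of length `o`. -/
theorem stmt10 {I : Type*} [Fintype I] [DecidableEq I]
    (len c : I → ℕ) (vol : ℕ → ℝ) (M : ℝ)
    (hM : 0 < M) (hvol : ∀ o, 0 < vol o)
    (hfeas : ∀ T : ℕ,
      ∑ i ∈ Finset.univ.filter (fun i => c i ≤ T), vol (len i) ≤ (T : ℝ) * M) :
    1 / (4 * M) * ∑ o ∈ Finset.image len Finset.univ,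
        ((Finset.univ.filter (fun i => len i = o)).card : ℝ) ^ 2 * vol o ≤
      ∑ i, (c i : ℝ) :=
  stmt10_general len c vol M hM hvol hfeas
end

section
/- (Structure of the LP optimum) In the linear program min ∑_t t·∑_o a_o^t subject to ∑_{t' ≤ t} ∑_o a_o^{t'}·vol(o) ≤ t·M for all t ≥ 1, ∑_t a_o^t = n_o for all o, a_o^t ≥ 0, where vol(o) is strictly increasing in o: there exists an optimal solution in which the first-assignment times t*_o (the smallest t with a_o^t > 0) are nondecreasing in o, i.e., t*_o ≤ t*_{o'} whenever o < o'. -/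
def LPFeasible (O : Finset ℕ) (n vol : ℕ → ℝ) (M : ℝ) (T : ℕ)
    (a : ℕ → ℕ → ℝ) : Prop :=
  (∀ o t, 0 ≤ a o t) ∧
  (∀ t ∈ Finset.Icc 1 T,
      ∑ t' ∈ Finset.Icc 1 t, ∑ o ∈ O, a o t' * vol o ≤ (t : ℝ) * M) ∧
  (∀ o ∈ O, ∑ t ∈ Finset.Icc 1 T, a o t = n o)

def LPCost (O : Finset ℕ) (T : ℕ) (a : ℕ → ℕ → ℝ) : ℝ :=
  ∑ t ∈ Finset.Icc 1 T, (t : ℝ) * ∑ o ∈ O, a o t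

lemma eval_cont (o t : ℕ) : Continuous fun a : ℕ → ℕ → ℝ => a o t :=
  (continuous_apply t).comp (continuous_apply o)

def Bset (O : Finset ℕ) (n vol : ℕ → ℝ) (M : ℝ) (T : ℕ) : Set (ℕ → ℕ → ℝ) :=
  {a | LPFeasible O n vol M T a ∧ ∀ o t, ¬(o ∈ O ∧ t ∈ Finset.Icc 1 T) → a o t = 0}

lemma LPCost_cont (O : Finset ℕ) (T : ℕ) : Continuous (LPCost O T) := by
  unfold LPCost
  exact continuous_finset_sum _ fun t _ =>
    continuous_const.mul (continuous_finset_sum _ fun o _ => eval_cont o t)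

lemma LPW_cont (O : Finset ℕ) (T : ℕ) :
    Continuous (fun a : ℕ → ℕ → ℝ => ∑ t ∈ Finset.Icc 1 T, (t : ℝ) * ∑ o ∈ O, (1/((o:ℝ)+1)) * a o t) :=
  continuous_finset_sum _ fun t _ =>
    continuous_const.mul (continuous_finset_sum _ fun o _ => continuous_const.mul (eval_cont o t))

lemma Bset_closed (O : Finset ℕ) (n vol : ℕ → ℝ) (M : ℝ) (T : ℕ) :
    IsClosed (Bset O n vol M T) := by
  have h : Bset O n vol M T =
      (⋂ o, ⋂ t, {a : ℕ → ℕ → ℝ | 0 ≤ a o t}) ∩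
      ((⋂ t ∈ Finset.Icc 1 T, {a : ℕ → ℕ → ℝ |
          ∑ t' ∈ Finset.Icc 1 t, ∑ o ∈ O, a o t' * vol o ≤ (t : ℝ) * M}) ∩
      ((⋂ o ∈ O, {a : ℕ → ℕ → ℝ | ∑ t ∈ Finset.Icc 1 T, a o t = n o}) ∩
       (⋂ o, ⋂ t, {a : ℕ → ℕ → ℝ | ¬(o ∈ O ∧ t ∈ Finset.Icc 1 T) → a o t = 0}))) := by
    ext a
    simp only [Bset, LPFeasible, Set.mem_inter_iff, Set.mem_iInter, Set.mem_setOf_eq]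
    tauto
  rw [h]
  refine IsClosed.inter ?_ (IsClosed.inter ?_ (IsClosed.inter ?_ ?_))
  · exact isClosed_iInter fun o => isClosed_iInter fun t =>
      isClosed_le continuous_const (eval_cont o t)
  · exact isClosed_iInter fun t => isClosed_iInter fun _ =>
      isClosed_le (continuous_finset_sum _ fun t' _ =>
        continuous_finset_sum _ fun o _ => (eval_cont o t').mul continuous_const) continuous_const
  · exact isClosed_iInter fun o => isClosed_iInter fun _ =>
      isClosed_eq (continuous_finset_sum _ fun t _ => eval_cont o t) continuous_const
  · refine isClosed_iInter fun o => isClosed_iInter fun t => ?_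
    by_cases hc : o ∈ O ∧ t ∈ Finset.Icc 1 T
    · have : {a : ℕ → ℕ → ℝ | ¬(o ∈ O ∧ t ∈ Finset.Icc 1 T) → a o t = 0} = Set.univ := by
        ext a; simp [hc]
      rw [this]; exact isClosed_univ
    · have : {a : ℕ → ℕ → ℝ | ¬(o ∈ O ∧ t ∈ Finset.Icc 1 T) → a o t = 0}
          = {a : ℕ → ℕ → ℝ | a o t = 0} := by
        ext a
        simp only [Set.mem_setOf_eq]
        exact ⟨fun h => h hc, fun h _ => h⟩
      rw [this]; exact isClosed_eq (eval_cont o t) continuous_const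

lemma Bset_compact (O : Finset ℕ) (n vol : ℕ → ℝ) (M : ℝ) (T : ℕ) (hn : ∀ o, 0 ≤ n o) :
    IsCompact (Bset O n vol M T) := by
  set bd : ℕ → ℕ → ℝ := fun o t => if o ∈ O ∧ t ∈ Finset.Icc 1 T then n o else 0 with hbd
  have hK : IsCompact (Set.pi (Set.univ : Set ℕ) fun o =>
      Set.pi (Set.univ : Set ℕ) fun t => Set.Icc (0:ℝ) (bd o t)) :=
    isCompact_univ_pi fun o => isCompact_univ_pi fun t => isCompact_Icc
  refine IsCompact.of_isClosed_subset hK (Bset_closed O n vol M T) ?_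
  rintro a ⟨⟨h1, _h2, h3⟩, hs⟩
  intro o _
  intro t _
  constructor
  · exact h1 o t
  · by_cases hc : o ∈ O ∧ t ∈ Finset.Icc 1 T
    · have : a o t ≤ ∑ y ∈ Finset.Icc 1 T, a o y :=
        Finset.single_le_sum (fun i _ => h1 o i) hc.2
      rw [h3 o hc.1] at this
      show a o t ≤ if o ∈ O ∧ t ∈ Finset.Icc 1 T then n o else 0
      rw [if_pos hc]
      exact this
    · show a o t ≤ if o ∈ O ∧ t ∈ Finset.Icc 1 T then n o else 0
      rw [hs o t hc, if_neg hc]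

lemma restrict_spec (O : Finset ℕ) (n vol : ℕ → ℝ) (M : ℝ) (T : ℕ) (a : ℕ → ℕ → ℝ)
    (ha : LPFeasible O n vol M T a) :
    (fun o t => if o ∈ O ∧ t ∈ Finset.Icc 1 T then a o t else 0) ∈ Bset O n vol M T ∧
    LPCost O T (fun o t => if o ∈ O ∧ t ∈ Finset.Icc 1 T then a o t else 0) = LPCost O T a := by
  obtain ⟨h1, h2, h3⟩ := ha
  have key : ∀ t ∈ Finset.Icc 1 T, ∀ o ∈ O,
      (if o ∈ O ∧ t ∈ Finset.Icc 1 T then a o t else 0) = a o t := by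
    intro t ht o ho; simp [ho, ht]
  constructor
  · refine ⟨⟨fun o t => ?_, fun t ht => ?_, fun o ho => ?_⟩, fun o t h => if_neg h⟩
    · show (0:ℝ) ≤ if o ∈ O ∧ t ∈ Finset.Icc 1 T then a o t else 0
      split_ifs with h; exacts [h1 o t, le_rfl]
    · have : ∑ t' ∈ Finset.Icc 1 t, ∑ o ∈ O,
          (if o ∈ O ∧ t' ∈ Finset.Icc 1 T then a o t' else 0) * vol o
          = ∑ t' ∈ Finset.Icc 1 t, ∑ o ∈ O, a o t' * vol o := by
        refine Finset.sum_congr rfl fun t' ht' => Finset.sum_congr rfl fun o ho => ?_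
        have h1t : t' ∈ Finset.Icc 1 T := by
          simp only [Finset.mem_Icc] at *
          exact ⟨ht'.1, ht'.2.trans ht.2⟩
        rw [key t' h1t o ho]
      rw [this]; exact h2 t ht
    · have : ∑ t ∈ Finset.Icc 1 T, (if o ∈ O ∧ t ∈ Finset.Icc 1 T then a o t else 0)
          = ∑ t ∈ Finset.Icc 1 T, a o t :=
        Finset.sum_congr rfl fun t ht => key t ht o ho
      rw [this]; exact h3 o ho
  · unfold LPCost
    refine Finset.sum_congr rfl fun t ht => ?_
    congr 1
    exact Finset.sum_congr rfl fun o ho => key t ht o ho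


lemma ite_sum_right {S : Finset ℕ} {t0 : ℕ} (h : t0 ∈ S) (c : Prop) [Decidable c] (v : ℝ) :
    ∑ y ∈ S, (if c ∧ y = t0 then v else 0) = if c then v else 0 := by
  by_cases hc : c <;> simp [hc, h]

lemma ite_sum_left {S : Finset ℕ} {x0 : ℕ} (h : x0 ∈ S) (c : Prop) [Decidable c] (f : ℕ → ℝ) :
    ∑ x ∈ S, (if x = x0 ∧ c then f x else 0) = if c then f x0 else 0 := by
  by_cases hc : c <;> simp [hc, h]


/-- (Structure of the LP optimum.) If `vol` is strictly increasing, there exists an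
optimal LP solution whose first-assignment times are nondecreasing in `o`: whenever
`o < o'` (both in `O`, with `n o > 0`) and mass of `o'` is placed at time `t'`,
some mass of `o` is placed at a time `t ≤ t'`. -/
theorem stmt16 (O : Finset ℕ) (n vol : ℕ → ℝ) (M : ℝ) (T : ℕ)
    (hM : 0 < M) (hn : ∀ o, 0 ≤ n o) (hvol : StrictMono vol)
    (hfeas : ∃ a, LPFeasible O n vol M T a) :
    ∃ a, LPFeasible O n vol M T a ∧
      (∀ b, LPFeasible O n vol M T b → LPCost O T a ≤ LPCost O T b) ∧
      (∀ o ∈ O, ∀ o' ∈ O, o < o' → 0 < n o →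
        ∀ t' ∈ Finset.Icc 1 T, 0 < a o' t' →
          ∃ t ∈ Finset.Icc 1 T, t ≤ t' ∧ 0 < a o t) := by
  classical
  obtain ⟨af, haf⟩ := hfeas
  obtain ⟨hrB, _⟩ := restrict_spec O n vol M T af haf
  have hBne : (Bset O n vol M T).Nonempty := ⟨_, hrB⟩
  have hcpt := Bset_compact O n vol M T hn
  obtain ⟨a0, ha0, hmin0⟩ := hcpt.exists_isMinOn hBne (LPCost_cont O T).continuousOn
  have hK2cl : IsClosed (Bset O n vol M T ∩ {a | LPCost O T a = LPCost O T a0}) :=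
    (Bset_closed O n vol M T).inter (isClosed_eq (LPCost_cont O T) continuous_const)
  have hK2cpt : IsCompact (Bset O n vol M T ∩ {a | LPCost O T a = LPCost O T a0}) :=
    hcpt.of_isClosed_subset hK2cl Set.inter_subset_left
  have hK2ne : (Bset O n vol M T ∩ {a | LPCost O T a = LPCost O T a0}).Nonempty :=
    ⟨a0, ha0, rfl⟩
  obtain ⟨aS, hasK, hmin2⟩ := hK2cpt.exists_isMinOn hK2ne (LPW_cont O T).continuousOn
  obtain ⟨⟨hfe, hsupp⟩, hcostS⟩ := hasK
  have hcostS' : LPCost O T aS = LPCost O T a0 := hcostS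
  refine ⟨aS, hfe, ?_, ?_⟩
  · intro b hb
    obtain ⟨hrbB, hrbc⟩ := restrict_spec O n vol M T b hb
    calc LPCost O T aS = LPCost O T a0 := hcostS'
      _ ≤ LPCost O T _ := hmin0 hrbB
      _ = LPCost O T b := hrbc
  · intro o hoO o' ho'O hoo' hno t' ht' hpos'
    by_contra hcon
    push_neg at hcon
    obtain ⟨h1, h2, h3⟩ := hfe
    have hex : ∃ s ∈ Finset.Icc 1 T, 0 < aS o s := by
      by_contra h
      push_neg at h
      have hz : ∑ t ∈ Finset.Icc 1 T, aS o t = 0 :=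
        le_antisymm (Finset.sum_nonpos h) (Finset.sum_nonneg fun i _ => h1 o i)
      rw [h3 o hoO] at hz
      exact absurd hz (ne_of_gt hno)
    obtain ⟨s, hsmem, hspos⟩ := hex
    have hts : t' < s := by
      by_contra h
      push_neg at h
      exact absurd hspos (not_lt.2 (hcon s hsmem h))
    have hne1 : o ≠ o' := ne_of_lt hoo'
    have hne2 : t' ≠ s := ne_of_lt hts
    set ε : ℝ := min (aS o' t') (aS o s) with hεdef
    have hε : 0 < ε := lt_min hpos' hspos
    have hε1 : ε ≤ aS o' t' := min_le_left _ _
    have hε2 : ε ≤ aS o s := min_le_right _ _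
    set e : ℕ → ℕ → ℝ := fun x y =>
      (if x = o ∧ y = t' then ε else 0) - (if x = o ∧ y = s then ε else 0)
      - (if x = o' ∧ y = t' then ε else 0) + (if x = o' ∧ y = s then ε else 0) with he
    set a2 : ℕ → ℕ → ℝ := fun x y => aS x y + e x y with ha2
    have inner_sum : ∀ (g : ℕ → ℝ) (t1 : ℕ),
        ∑ x ∈ O, g x * e x t1 =
          (if t1 = t' then g o * ε else 0) - (if t1 = s then g o * ε else 0)
          - (if t1 = t' then g o' * ε else 0) + (if t1 = s then g o' * ε else 0) := by
      intro g t1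
      simp only [he, mul_sub, mul_add, Finset.sum_add_distrib, Finset.sum_sub_distrib,
        mul_ite, mul_zero]
      rw [ite_sum_left hoO, ite_sum_left hoO, ite_sum_left ho'O, ite_sum_left ho'O]
    -- values of e
    have e_oT : e o t' = ε := by simp [he, hne1, hne2]
    have e_oS : e o s = -ε := by simp [he, hne1, Ne.symm hne2]
    have e_o'T : e o' t' = -ε := by simp [he, Ne.symm hne1, hne2]
    have e_o'S : e o' s = ε := by simp [he, Ne.symm hne1, Ne.symm hne2]
    have e_other : ∀ x y, (x ≠ o ∧ x ≠ o') ∨ (y ≠ t' ∧ y ≠ s) → e x y = 0 := by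
      rintro x y (⟨hx1, hx2⟩ | ⟨hy1, hy2⟩)
      · simp [he, hx1, hx2]
      · simp [he, hy1, hy2]
    -- nonnegativity
    have nn2 : ∀ x y, 0 ≤ a2 x y := by
      intro x y
      have h0 := h1 x y
      show 0 ≤ aS x y + e x y
      by_cases hx : x = o
      · subst hx
        by_cases hy : y = t'
        · subst hy; rw [e_oT]; linarith
        · by_cases hy' : y = s
          · subst hy'; rw [e_oS]; linarith
          · rw [e_other x y (Or.inr ⟨hy, hy'⟩), add_zero]; exact h0
      · by_cases hx' : x = o'
        · subst hx'
          by_cases hy : y = t'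
          · subst hy; rw [e_o'T]; linarith
          · by_cases hy' : y = s
            · subst hy'; rw [e_o'S]; linarith
            · rw [e_other x y (Or.inr ⟨hy, hy'⟩), add_zero]; exact h0
        · rw [e_other x y (Or.inl ⟨hx, hx'⟩), add_zero]; exact h0
    -- capacity
    have cap2 : ∀ t ∈ Finset.Icc 1 T,
        ∑ t1 ∈ Finset.Icc 1 t, ∑ x ∈ O, a2 x t1 * vol x ≤ (t : ℝ) * M := by
      intro t ht
      have expand : ∀ t1, ∑ x ∈ O, a2 x t1 * vol x
          = ∑ x ∈ O, aS x t1 * vol x + ∑ x ∈ O, vol x * e x t1 := by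
        intro t1
        rw [← Finset.sum_add_distrib]
        refine Finset.sum_congr rfl fun x _ => ?_
        show (aS x t1 + e x t1) * vol x = _
        ring
      have hsplit : ∑ t1 ∈ Finset.Icc 1 t, ∑ x ∈ O, a2 x t1 * vol x
          = (∑ t1 ∈ Finset.Icc 1 t, ∑ x ∈ O, aS x t1 * vol x)
            + ∑ t1 ∈ Finset.Icc 1 t, ∑ x ∈ O, vol x * e x t1 := by
        rw [← Finset.sum_add_distrib]
        exact Finset.sum_congr rfl fun t1 _ => expand t1
      have hΔ : ∑ t1 ∈ Finset.Icc 1 t, ∑ x ∈ O, vol x * e x t1 ≤ 0 := by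
        have step1 : ∑ t1 ∈ Finset.Icc 1 t, ∑ x ∈ O, vol x * e x t1
            = ∑ t1 ∈ Finset.Icc 1 t,
              ((if t1 = t' then vol o * ε else 0) - (if t1 = s then vol o * ε else 0)
               - (if t1 = t' then vol o' * ε else 0) + (if t1 = s then vol o' * ε else 0)) :=
          Finset.sum_congr rfl fun t1 _ => inner_sum vol t1
        rw [step1]
        have step2 : ∑ t1 ∈ Finset.Icc 1 t,
              ((if t1 = t' then vol o * ε else 0) - (if t1 = s then vol o * ε else 0)
               - (if t1 = t' then vol o' * ε else 0) + (if t1 = s then vol o' * ε else 0))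
            = (if t' ∈ Finset.Icc 1 t then vol o * ε else 0)
              - (if s ∈ Finset.Icc 1 t then vol o * ε else 0)
              - (if t' ∈ Finset.Icc 1 t then vol o' * ε else 0)
              + (if s ∈ Finset.Icc 1 t then vol o' * ε else 0) := by
          simp only [Finset.sum_add_distrib, Finset.sum_sub_distrib]
          rw [Finset.sum_ite_eq' (Finset.Icc 1 t) t', Finset.sum_ite_eq' (Finset.Icc 1 t) s,
            Finset.sum_ite_eq' (Finset.Icc 1 t) t', Finset.sum_ite_eq' (Finset.Icc 1 t) s]
        rw [step2]
        have himp : s ∈ Finset.Icc 1 t → t' ∈ Finset.Icc 1 t := by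
          intro hs2
          simp only [Finset.mem_Icc] at hs2 ht' ⊢
          omega
        have hvv : vol o < vol o' := hvol hoo'
        split_ifs with hA hB
        · linarith
        · nlinarith
        · exact absurd (himp ‹s ∈ Finset.Icc 1 t›) hA
        · linarith
      rw [hsplit]
      have := h2 t ht
      linarith
    -- mass
    have mass2 : ∀ x ∈ O, ∑ y ∈ Finset.Icc 1 T, a2 x y = n x := by
      intro x hx
      have hsplit : ∑ y ∈ Finset.Icc 1 T, a2 x y
          = ∑ y ∈ Finset.Icc 1 T, aS x y + ∑ y ∈ Finset.Icc 1 T, e x y := by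
        rw [← Finset.sum_add_distrib]
      have hze : ∑ y ∈ Finset.Icc 1 T, e x y = 0 := by
        simp only [he, Finset.sum_add_distrib, Finset.sum_sub_distrib]
        rw [ite_sum_right ht', ite_sum_right hsmem, ite_sum_right ht', ite_sum_right hsmem]
        ring
      rw [hsplit, hze, add_zero, h3 x hx]
    -- support
    have hsupp2 : ∀ x y, ¬(x ∈ O ∧ y ∈ Finset.Icc 1 T) → a2 x y = 0 := by
      intro x y h
      have hz := hsupp x y h
      have hez : e x y = 0 := by
        have c1 : ¬(x = o ∧ y = t') := by rintro ⟨rfl, rfl⟩; exact h ⟨hoO, ht'⟩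
        have c2 : ¬(x = o ∧ y = s) := by rintro ⟨rfl, rfl⟩; exact h ⟨hoO, hsmem⟩
        have c3 : ¬(x = o' ∧ y = t') := by rintro ⟨rfl, rfl⟩; exact h ⟨ho'O, ht'⟩
        have c4 : ¬(x = o' ∧ y = s) := by rintro ⟨rfl, rfl⟩; exact h ⟨ho'O, hsmem⟩
        simp only [he, if_neg c1, if_neg c2, if_neg c3, if_neg c4]
        ring
      show aS x y + e x y = 0
      rw [hz, hez, add_zero]
    -- cost unchanged
    have cost2 : LPCost O T a2 = LPCost O T aS := by
      unfold LPCost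
      refine Finset.sum_congr rfl fun t1 _ => ?_
      congr 1
      have hsplit : ∑ x ∈ O, a2 x t1 = ∑ x ∈ O, aS x t1 + ∑ x ∈ O, e x t1 := by
        rw [← Finset.sum_add_distrib]
      have hze : ∑ x ∈ O, e x t1 = 0 := by
        simp only [he, Finset.sum_add_distrib, Finset.sum_sub_distrib]
        rw [ite_sum_left hoO, ite_sum_left hoO, ite_sum_left ho'O, ite_sum_left ho'O]
        ring
      rw [hsplit, hze, add_zero]
    -- weighted objective strictly decreases
    have hWsplit : (∑ t1 ∈ Finset.Icc 1 T, (t1:ℝ) * ∑ x ∈ O, (1/((x:ℝ)+1)) * a2 x t1)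
        = (∑ t1 ∈ Finset.Icc 1 T, (t1:ℝ) * ∑ x ∈ O, (1/((x:ℝ)+1)) * aS x t1)
          + ∑ t1 ∈ Finset.Icc 1 T, (t1:ℝ) * ∑ x ∈ O, (1/((x:ℝ)+1)) * e x t1 := by
      rw [← Finset.sum_add_distrib]
      refine Finset.sum_congr rfl fun t1 _ => ?_
      have : ∑ x ∈ O, (1/((x:ℝ)+1)) * a2 x t1
          = ∑ x ∈ O, (1/((x:ℝ)+1)) * aS x t1 + ∑ x ∈ O, (1/((x:ℝ)+1)) * e x t1 := by
        rw [← Finset.sum_add_distrib]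
        refine Finset.sum_congr rfl fun x _ => ?_
        show (1/((x:ℝ)+1)) * (aS x t1 + e x t1) = _
        ring
      rw [this]
      ring
    have hWe : ∑ t1 ∈ Finset.Icc 1 T, (t1:ℝ) * ∑ x ∈ O, (1/((x:ℝ)+1)) * e x t1
        = (t':ℝ) * ((1/((o:ℝ)+1)) * ε) - (s:ℝ) * ((1/((o:ℝ)+1)) * ε)
          - (t':ℝ) * ((1/((o':ℝ)+1)) * ε) + (s:ℝ) * ((1/((o':ℝ)+1)) * ε) := by
      have step1 : ∑ t1 ∈ Finset.Icc 1 T, (t1:ℝ) * ∑ x ∈ O, (1/((x:ℝ)+1)) * e x t1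
          = ∑ t1 ∈ Finset.Icc 1 T, (t1:ℝ) *
            ((if t1 = t' then (1/((o:ℝ)+1)) * ε else 0) - (if t1 = s then (1/((o:ℝ)+1)) * ε else 0)
             - (if t1 = t' then (1/((o':ℝ)+1)) * ε else 0)
             + (if t1 = s then (1/((o':ℝ)+1)) * ε else 0)) :=
        Finset.sum_congr rfl fun t1 _ => by rw [inner_sum (fun x => 1/((x:ℝ)+1)) t1]
      rw [step1]
      simp only [mul_sub, mul_add, Finset.sum_add_distrib, Finset.sum_sub_distrib,
        mul_ite, mul_zero]
      rw [Finset.sum_ite_eq' (Finset.Icc 1 T) t', Finset.sum_ite_eq' (Finset.Icc 1 T) s,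
        Finset.sum_ite_eq' (Finset.Icc 1 T) t', Finset.sum_ite_eq' (Finset.Icc 1 T) s]
      simp [ht', hsmem]
    have hwlt : 1/((o':ℝ)+1) < 1/((o:ℝ)+1) := by
      have hc : (o:ℝ) < (o':ℝ) := Nat.cast_lt.2 hoo'
      apply one_div_lt_one_div_of_lt
      · positivity
      · linarith
    have hstlt : (t':ℝ) < (s:ℝ) := Nat.cast_lt.2 hts
    have ha2K2 : a2 ∈ Bset O n vol M T ∩ {a | LPCost O T a = LPCost O T a0} :=
      ⟨⟨⟨nn2, cap2, mass2⟩, hsupp2⟩, cost2.trans hcostS'⟩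
    have hle := hmin2 ha2K2
    simp only [Set.mem_setOf_eq] at hle
    rw [hWsplit, hWe] at hle
    nlinarith [mul_pos (mul_pos (sub_pos.2 hstlt) (sub_pos.2 hwlt)) hε]
end
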